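/- Let A, B ∈ L(H) with R(A+B) closed and A ≤⁻_l (A+B). Suppose P, Q ∈ L(H) are idempotents with A = P(A+B) = (A+B)Q, such that P_A P + P_B (I−P) and P_{A*} Q* + P_{B*}(I−Q*) are selfadjoint (P, Q optimal). Then the Moore–Penrose inverse satisfies (A+B)† = Q A† P + (I−Q) B† (I−P). -/

import Mathlib

/-!
The candidate `X = Q A† P + (I - Q) B† (I - P)` satisfies the four Penrose equations for
`A + B`. From `P (A + B) = A` and `(A + B) Q = A` one gets
`(A + B) X = A A† P + B B† (I - P)` and `X (A + B) = Q A† A + (I - Q) B† B`. Since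
`A A†` and `A† A` are the orthogonal projections onto `R(A)` and `R(A*)`, optimality of `P`
and `Q` says exactly that these two products are selfadjoint. Idempotence of `P` gives `P A = A` and
`P B = 0`, hence `X (A + B) X = X`. Uniqueness of the Moore–Penrose inverse concludes.
-/

open ContinuousLinearMap

/-- `S` is the Moore–Penrose inverse of `T`. -/
def IsMoorePenroseInverse {H : Type*} [NormedAddCommGroup H] [InnerProductSpace ℂ H]
    [CompleteSpace H] (T S : H →L[ℂ] H) : Prop :=
  T ∘L S ∘L T = T ∧ S ∘L T ∘L S = S ∧
    IsSelfAdjoint (T ∘L S) ∧ IsSelfAdjoint (S ∘L T)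

structure IsPenroseInverse {R : Type*} [Mul R] [Star R] (a x : R) : Prop where
  mul_inv_mul : a * x * a = a
  inv_mul_inv : x * a * x = x
  isSelfAdjoint_mul_inv : IsSelfAdjoint (a * x)
  isSelfAdjoint_inv_mul : IsSelfAdjoint (x * a)

namespace IsPenroseInverse

section Semigroup

variable {R : Type*} [Semigroup R] [StarMul R] {a x y : R}

theorem star_eq_star_mul_mul_inv (h : IsPenroseInverse a x) : star a = star a * (a * x) := by
  conv_lhs => rw [← h.mul_inv_mul, star_mul, h.isSelfAdjoint_mul_inv.star_eq]

theorem star_eq_inv_mul_mul_star (h : IsPenroseInverse a x) : star a = x * a * star a := by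
  conv_lhs => rw [← h.mul_inv_mul, mul_assoc, star_mul, h.isSelfAdjoint_inv_mul.star_eq]

theorem unique (hx : IsPenroseInverse a x) (hy : IsPenroseInverse a y) : x = y := by
  have hx_eq : x = x * a * y :=
    calc x = x * star (a * x) := by
          rw [hx.isSelfAdjoint_mul_inv.star_eq, ← mul_assoc, hx.inv_mul_inv]
      _ = x * star x * (star a * (a * y)) := by
          rw [star_mul, ← hy.star_eq_star_mul_mul_inv, mul_assoc]
      _ = x * (a * x) * a * y := by
        rw [← hx.isSelfAdjoint_mul_inv.star_eq, star_mul]; simp only [mul_assoc]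
      _ = x * a * y := by rw [← mul_assoc, hx.inv_mul_inv]
  have hy_eq : y = x * a * y :=
    calc y = star (y * a) * y := by rw [hy.isSelfAdjoint_inv_mul.star_eq, hy.inv_mul_inv]
      _ = x * a * star a * star y * y := by rw [star_mul, ← hx.star_eq_inv_mul_mul_star]
      _ = x * a * (y * a) * y := by
        rw [← hy.isSelfAdjoint_inv_mul.star_eq, star_mul]; simp only [mul_assoc]
      _ = x * a * y := by simp only [mul_assoc, hy.inv_mul_inv]
  rw [hx_eq, ← hy_eq]

theorem isStarProjection_mul_inv (h : IsPenroseInverse a x) : IsStarProjection (a * x) where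
  isIdempotentElem := by rw [IsIdempotentElem, ← mul_assoc, h.mul_inv_mul]
  isSelfAdjoint := h.isSelfAdjoint_mul_inv

theorem isStarProjection_inv_mul (h : IsPenroseInverse a x) : IsStarProjection (x * a) where
  isIdempotentElem := by rw [IsIdempotentElem, ← mul_assoc, h.inv_mul_inv]
  isSelfAdjoint := h.isSelfAdjoint_inv_mul

end Semigroup

section Ring

variable {R : Type*} [Ring R] [StarRing R] {a b a' b' p q : R}

theorem add_of_isIdempotentElem (ha : IsPenroseInverse a a') (hb : IsPenroseInverse b b')
    (hp : IsIdempotentElem p) (hpa : p * (a + b) = a) (hqa : (a + b) * q = a)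
    (hp_opt : IsSelfAdjoint (a * a' * p + b * b' * (1 - p)))
    (hq_opt : IsSelfAdjoint (a' * a * star q + b' * b * (1 - star q))) :
    IsPenroseInverse (a + b) (q * a' * p + (1 - q) * b' * (1 - p)) := by
  have hpb : (1 - p) * (a + b) = b := by rw [sub_mul, one_mul, hpa, add_sub_cancel_left]
  have hqb : (a + b) * (1 - q) = b := by rw [mul_sub, mul_one, hqa, add_sub_cancel_left]
  have hp_a : p * a = a := by rw [← hpa, ← mul_assoc, hp.eq]
  have hp_b : p * b = 0 := by
    have h := hpa
    rwa [mul_add, hp_a, add_eq_left] at h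
  have hmul_right : (a + b) * (q * a' * p + (1 - q) * b' * (1 - p)) =
      a * a' * p + b * b' * (1 - p) := by
    simp only [mul_add, ← mul_assoc, hqa, hqb]
  have hmul_left : (q * a' * p + (1 - q) * b' * (1 - p)) * (a + b) =
      q * (a' * a) + (1 - q) * (b' * b) := by
    simp only [add_mul, mul_assoc, hpa, hpb]
  constructor
  · rw [hmul_right, add_mul, mul_assoc (a * a'), hpa, mul_assoc (b * b'), hpb,
      ha.mul_inv_mul, hb.mul_inv_mul]
  · have hpa' : ∀ c, c * p * a = c * a := fun c => by rw [mul_assoc, hp_a]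
    have hpb' : ∀ c, c * p * b = 0 := fun c => by rw [mul_assoc, hp_b, mul_zero]
    have hpa'' : ∀ c, c * (1 - p) * a = 0 := fun c => by
      rw [mul_assoc, sub_mul, one_mul, hp_a, sub_self, mul_zero]
    have hpb'' : ∀ c, c * (1 - p) * b = c * b := fun c => by
      rw [mul_assoc, sub_mul, one_mul, hp_b, sub_zero]
    have ha' : ∀ c, c * a' * a * a' = c * a' := fun c => by
      rw [mul_assoc, mul_assoc, ← mul_assoc a', ha.inv_mul_inv]
    have hb' : ∀ c, c * b' * b * b' = c * b' := fun c => by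
      rw [mul_assoc, mul_assoc, ← mul_assoc b', hb.inv_mul_inv]
    rw [mul_assoc, hmul_right]
    simp only [mul_add, add_mul, ← mul_assoc, hpa', hpb', hpa'', hpb'', ha', hb', add_zero,
      zero_add]
  · rw [hmul_right]; exact hp_opt
  · have hstar : star (q * (a' * a) + (1 - q) * (b' * b)) =
        a' * a * star q + b' * b * (1 - star q) := by
      simp only [star_add, star_mul, star_sub, star_one, ha.isSelfAdjoint_inv_mul.star_eq,
        hb.isSelfAdjoint_inv_mul.star_eq]
    rw [hmul_left]
    exact IsSelfAdjoint.star_iff.mp (hstar ▸ hq_opt)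

end Ring

end IsPenroseInverse

section InnerProductSpace

variable {𝕜 E : Type*} [RCLike 𝕜] [NormedAddCommGroup E] [InnerProductSpace 𝕜 E]
  [CompleteSpace E]

theorem IsStarProjection.starProjection_topologicalClosure_eq_of_range_eq {p T : E →L[𝕜] E}
    (hp : IsStarProjection p)
    (h : LinearMap.range (p : E →ₗ[𝕜] E) = LinearMap.range (T : E →ₗ[𝕜] E)) :
    (LinearMap.range (T : E →ₗ[𝕜] E)).topologicalClosure.starProjection = p := by
  obtain ⟨_, hp_eq⟩ := isStarProjection_iff_eq_starProjection_range.mp hp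
  have hclosure : (LinearMap.range (T : E →ₗ[𝕜] E)).topologicalClosure =
      LinearMap.range (p : E →ₗ[𝕜] E) := by
    rw [← h]
    exact hp.isIdempotentElem.isClosed_range.submodule_topologicalClosure_eq
  have key : ∀ (K : Submodule 𝕜 E) [K.HasOrthogonalProjection],
      K = LinearMap.range (p : E →ₗ[𝕜] E) → K.starProjection = p := by
    rintro K _ rfl
    exact hp_eq.symm
  exact key _ hclosure

namespace IsPenroseInverse

variable {T S : E →L[𝕜] E}

theorem starProjection_topologicalClosure_range (h : IsPenroseInverse T S) :
    (LinearMap.range (T : E →ₗ[𝕜] E)).topologicalClosure.starProjection = T * S := by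
  refine h.isStarProjection_mul_inv.starProjection_topologicalClosure_eq_of_range_eq
    (le_antisymm (LinearMap.range_comp_le_range _ _) ?_)
  conv_lhs => rw [← h.mul_inv_mul]
  exact LinearMap.range_comp_le_range _ _

theorem starProjection_topologicalClosure_range_adjoint (h : IsPenroseInverse T S) :
    (LinearMap.range (adjoint T : E →ₗ[𝕜] E)).topologicalClosure.starProjection = S * T := by
  refine h.isStarProjection_inv_mul.starProjection_topologicalClosure_eq_of_range_eq
    (le_antisymm ?_ ?_)
  · rw [← h.isSelfAdjoint_inv_mul.star_eq, star_mul, star_eq_adjoint]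
    exact LinearMap.range_comp_le_range _ _
  · rw [← star_eq_adjoint, h.star_eq_inv_mul_mul_star]
    exact LinearMap.range_comp_le_range _ _

end IsPenroseInverse

end InnerProductSpace

theorem isMoorePenroseInverse_iff {H : Type*} [NormedAddCommGroup H] [InnerProductSpace ℂ H]
    [CompleteSpace H] {T S : H →L[ℂ] H} :
    IsMoorePenroseInverse T S ↔ IsPenroseInverse T S := by
  simp only [IsMoorePenroseInverse, ← mul_def, ← mul_assoc]
  exact ⟨fun ⟨h₁, h₂, h₃, h₄⟩ => ⟨h₁, h₂, h₃, h₄⟩, fun ⟨h₁, h₂, h₃, h₄⟩ => ⟨h₁, h₂, h₃, h₄⟩⟩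

theorem stmt_17_general {H : Type*} [NormedAddCommGroup H] [InnerProductSpace ℂ H]
    [CompleteSpace H] (A B P Q Ad Bd ABd : H →L[ℂ] H)
    (hP : P ∘L P = P)
    (hA1 : A = P ∘L (A + B)) (hA2 : A = (A + B) ∘L Q)
    (hPopt : IsSelfAdjoint
      (((LinearMap.range (A : H →ₗ[ℂ] H)).topologicalClosure.subtypeL ∘L
          Submodule.orthogonalProjectionOnto (LinearMap.range (A : H →ₗ[ℂ] H)).topologicalClosure) ∘L P +
        ((LinearMap.range (B : H →ₗ[ℂ] H)).topologicalClosure.subtypeL ∘L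
          Submodule.orthogonalProjectionOnto (LinearMap.range (B : H →ₗ[ℂ] H)).topologicalClosure) ∘L (1 - P)))
    (hQopt : IsSelfAdjoint
      (((LinearMap.range (adjoint A : H →ₗ[ℂ] H)).topologicalClosure.subtypeL ∘L
          Submodule.orthogonalProjectionOnto (LinearMap.range (adjoint A : H →ₗ[ℂ] H)).topologicalClosure) ∘L
            adjoint Q +
        ((LinearMap.range (adjoint B : H →ₗ[ℂ] H)).topologicalClosure.subtypeL ∘L
          Submodule.orthogonalProjectionOnto (LinearMap.range (adjoint B : H →ₗ[ℂ] H)).topologicalClosure) ∘L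
            (1 - adjoint Q)))
    (hAd : IsMoorePenroseInverse A Ad) (hBd : IsMoorePenroseInverse B Bd)
    (hABd : IsMoorePenroseInverse (A + B) ABd) :
    ABd = Q ∘L Ad ∘L P + (1 - Q) ∘L Bd ∘L (1 - P) := by
  rw [isMoorePenroseInverse_iff] at hAd hBd hABd
  have hP_opt : IsSelfAdjoint (A * Ad * P + B * Bd * (1 - P)) := by
    rwa [← Submodule.starProjection, ← Submodule.starProjection,
      hAd.starProjection_topologicalClosure_range,
      hBd.starProjection_topologicalClosure_range] at hPopt
  have hQ_opt : IsSelfAdjoint (Ad * A * star Q + Bd * B * (1 - star Q)) := by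
    rwa [← Submodule.starProjection, ← Submodule.starProjection,
      hAd.starProjection_topologicalClosure_range_adjoint,
      hBd.starProjection_topologicalClosure_range_adjoint, ← star_eq_adjoint] at hQopt
  rw [hABd.unique (hAd.add_of_isIdempotentElem hBd hP hA1.symm hA2.symm hP_opt hQ_opt),
    mul_assoc, mul_assoc]
  rfl

theorem stmt_17 {H : Type*} [NormedAddCommGroup H] [InnerProductSpace ℂ H]
    [CompleteSpace H] (A B P Q Ad Bd ABd : H →L[ℂ] H)
    (hclosed : IsClosed ((LinearMap.range (A + B : H →ₗ[ℂ] H) : Submodule ℂ H) : Set H))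
    (hlminus : LinearMap.range (A + B : H →ₗ[ℂ] H) = LinearMap.range (A : H →ₗ[ℂ] H) ⊔ LinearMap.range (B : H →ₗ[ℂ] H) ∧
      LinearMap.range (A : H →ₗ[ℂ] H) ⊓ LinearMap.range (B : H →ₗ[ℂ] H) = ⊥)
    (hP : P ∘L P = P) (hQ : Q ∘L Q = Q)
    (hA1 : A = P ∘L (A + B)) (hA2 : A = (A + B) ∘L Q)
    (hPopt : IsSelfAdjoint
      (((LinearMap.range (A : H →ₗ[ℂ] H)).topologicalClosure.subtypeL ∘L
          Submodule.orthogonalProjectionOnto (LinearMap.range (A : H →ₗ[ℂ] H)).topologicalClosure) ∘L P +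
        ((LinearMap.range (B : H →ₗ[ℂ] H)).topologicalClosure.subtypeL ∘L
          Submodule.orthogonalProjectionOnto (LinearMap.range (B : H →ₗ[ℂ] H)).topologicalClosure) ∘L (1 - P)))
    (hQopt : IsSelfAdjoint
      (((LinearMap.range (adjoint A : H →ₗ[ℂ] H)).topologicalClosure.subtypeL ∘L
          Submodule.orthogonalProjectionOnto (LinearMap.range (adjoint A : H →ₗ[ℂ] H)).topologicalClosure) ∘L
            adjoint Q +
        ((LinearMap.range (adjoint B : H →ₗ[ℂ] H)).topologicalClosure.subtypeL ∘L
          Submodule.orthogonalProjectionOnto (LinearMap.range (adjoint B : H →ₗ[ℂ] H)).topologicalClosure) ∘L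
            (1 - adjoint Q)))
    (hAd : IsMoorePenroseInverse A Ad) (hBd : IsMoorePenroseInverse B Bd)
    (hABd : IsMoorePenroseInverse (A + B) ABd) :
    ABd = Q ∘L Ad ∘L P + (1 - Q) ∘L Bd ∘L (1 - P) :=
  stmt_17_general A B P Q Ad Bd ABd hP hA1 hA2 hPopt hQopt hAd hBd hABd
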